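/- arXiv:1903.01791 — 2 statements merged into one kernel-verified Lean document; each statement's English description precedes it below -/
import Mathlib

section
/- Let n ≥ 1 and let r : ℝ × ℝ → ℂⁿ be smooth. Then the zero-curvature condition ∂ₜU(λ) − ∂ₓV(λ) + [U(λ), V(λ)] = 0 holds for every λ ∈ ℂ if and only if r solves the focusing vector nonlinear Schrödinger equation i ∂ₜr + ∂ₓₓr + 2 (r†r) r = 0. -/
open Complex Matrix

noncomputable section

def pdx (f : ℝ × ℝ → ℂ) : ℝ × ℝ → ℂ := fun p => deriv (fun x => f (x, p.2)) p.1

def pdt (f : ℝ × ℝ → ℂ) : ℝ × ℝ → ℂ := fun p => deriv (fun t => f (p.1, t)) p.2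

def VNLS {n : ℕ} (r : ℝ × ℝ → Fin n → ℂ) (p : ℝ × ℝ) : Prop :=
  ∀ ℓ : Fin n, Complex.I * pdt (fun q => r q ℓ) p + pdx (pdx (fun q => r q ℓ)) p
      + 2 * (∑ j, (starRingEnd ℂ) (r p j) * r p j) * r p ℓ = 0

def Sig (n : ℕ) : Matrix (Fin (n+1)) (Fin (n+1)) ℂ :=
  Matrix.diagonal (fun i => if i = Fin.last n then -1 else 1)

def Qm {n : ℕ} (a : Fin n → ℂ) : Matrix (Fin (n+1)) (Fin (n+1)) ℂ :=
  Matrix.of fun i j =>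
    if hi : i = Fin.last n then
      (if hj : j = Fin.last n then 0 else -(starRingEnd ℂ) (a (j.castPred hj)))
    else
      (if _ : j = Fin.last n then a (i.castPred hi) else 0)

def Umat {n : ℕ} (lam : ℂ) (r : ℝ × ℝ → Fin n → ℂ) (p : ℝ × ℝ) :
    Matrix (Fin (n+1)) (Fin (n+1)) ℂ :=
  (-Complex.I * lam) • Sig n + Qm (r p)

def Vmat {n : ℕ} (lam : ℂ) (r : ℝ × ℝ → Fin n → ℂ) (p : ℝ × ℝ) :
    Matrix (Fin (n+1)) (Fin (n+1)) ℂ :=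
  (-2 * Complex.I * lam ^ 2) • Sig n + (2 * lam) • Qm (r p)
    - Complex.I • (Qm (fun ℓ => pdx (fun q => r q ℓ) p) * Sig n)
    - Complex.I • (Qm (r p) * Qm (r p) * Sig n)

lemma diffx {f : ℝ × ℝ → ℂ} (hf : ContDiff ℝ (⊤ : ℕ∞) f) (p : ℝ × ℝ) :
    DifferentiableAt ℝ (fun x => f (x, p.2)) p.1 :=
  DifferentiableAt.comp p.1 (hf.differentiable (by simp) (p.1, p.2))
    (differentiableAt_id.prodMk (differentiableAt_const _))

lemma difft {f : ℝ × ℝ → ℂ} (hf : ContDiff ℝ (⊤ : ℕ∞) f) (p : ℝ × ℝ) :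
    DifferentiableAt ℝ (fun t => f (p.1, t)) p.2 :=
  DifferentiableAt.comp p.2 (hf.differentiable (by simp) (p.1, p.2))
    ((differentiableAt_const _).prodMk differentiableAt_id)

lemma hasDerivAt_pdx {f : ℝ × ℝ → ℂ} (hf : ContDiff ℝ (⊤ : ℕ∞) f) (p : ℝ × ℝ) :
    HasDerivAt (fun x => f (x, p.2)) (pdx f p) p.1 :=
  (diffx hf p).hasDerivAt

lemma hasDerivAt_pdt {f : ℝ × ℝ → ℂ} (hf : ContDiff ℝ (⊤ : ℕ∞) f) (p : ℝ × ℝ) :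
    HasDerivAt (fun t => f (p.1, t)) (pdt f p) p.2 :=
  (difft hf p).hasDerivAt

lemma HasDerivAt.conjC {f : ℝ → ℂ} {f' : ℂ} {x : ℝ} (h : HasDerivAt f f' x) :
    HasDerivAt (fun y => (starRingEnd ℂ) (f y)) ((starRingEnd ℂ) f') x := by
  simpa [Complex.star_def] using h.star

lemma pdx_eq {f : ℝ × ℝ → ℂ} (hf : ContDiff ℝ (⊤ : ℕ∞) f) :
    pdx f = fun p => fderiv ℝ f p (1, 0) := by
  funext p
  have h1 : HasDerivAt (fun x : ℝ => ((x, p.2) : ℝ × ℝ)) (1, 0) p.1 :=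
    (hasDerivAt_id p.1).prodMk (hasDerivAt_const p.1 p.2)
  have h2 := ((hf.differentiable (by simp) (p.1, p.2)).hasFDerivAt.comp_hasDerivAt p.1 h1)
  simpa [pdx, Function.comp_def] using h2.deriv

lemma contDiff_pdx {f : ℝ × ℝ → ℂ} (hf : ContDiff ℝ (⊤ : ℕ∞) f) : ContDiff ℝ (⊤ : ℕ∞) (pdx f) := by
  rw [pdx_eq hf]
  exact (hf.fderiv_right (by simp)).clm_apply contDiff_const


variable {n : ℕ}

lemma csl (i : Fin n) : i.castSucc ≠ Fin.last n := (Fin.castSucc_lt_last i).ne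

lemma Qm_cc (a : Fin n → ℂ) (i j : Fin n) : Qm a i.castSucc j.castSucc = 0 := by
  simp [Qm, csl i, csl j]

lemma Qm_cl (a : Fin n → ℂ) (i : Fin n) : Qm a i.castSucc (Fin.last n) = a i := by
  simp [Qm, csl i]

lemma Qm_lc (a : Fin n → ℂ) (j : Fin n) :
    Qm a (Fin.last n) j.castSucc = -(starRingEnd ℂ) (a j) := by
  simp [Qm, csl j]

lemma Qm_ll (a : Fin n → ℂ) : Qm a (Fin.last n) (Fin.last n) = 0 := by simp [Qm]

lemma mul_Sig (M : Matrix (Fin (n+1)) (Fin (n+1)) ℂ) (i j : Fin (n+1)) :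
    (M * Sig n) i j = M i j * (if j = Fin.last n then -1 else 1) :=
  Matrix.mul_diagonal _ _ _ _

lemma QQ_cc (a : Fin n → ℂ) (i j : Fin n) :
    (Qm a * Qm a) i.castSucc j.castSucc = -(a i * (starRingEnd ℂ) (a j)) := by
  rw [Matrix.mul_apply, Fin.sum_univ_castSucc]
  simp [Qm_cc, Qm_cl, Qm_lc]

lemma QQ_cl (a : Fin n → ℂ) (i : Fin n) :
    (Qm a * Qm a) i.castSucc (Fin.last n) = 0 := by
  rw [Matrix.mul_apply, Fin.sum_univ_castSucc]
  simp [Qm_cc, Qm_cl, Qm_ll]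

lemma QQ_lc (a : Fin n → ℂ) (j : Fin n) :
    (Qm a * Qm a) (Fin.last n) j.castSucc = 0 := by
  rw [Matrix.mul_apply, Fin.sum_univ_castSucc]
  simp [Qm_cc, Qm_lc, Qm_ll]

lemma QQ_ll (a : Fin n → ℂ) :
    (Qm a * Qm a) (Fin.last n) (Fin.last n) = -∑ k, (starRingEnd ℂ) (a k) * a k := by
  rw [Matrix.mul_apply, Fin.sum_univ_castSucc]
  simp [Qm_lc, Qm_cl, Qm_ll, Finset.sum_neg_distrib]

lemma Sig_cc (i j : Fin n) : Sig n i.castSucc j.castSucc = if i = j then 1 else 0 := by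
  simp [Sig, Matrix.diagonal_apply, csl i, Fin.castSucc_inj]

lemma Sig_ll : Sig n (Fin.last n) (Fin.last n) = -1 := by simp [Sig]

lemma Sig_cl (i : Fin n) : Sig n i.castSucc (Fin.last n) = 0 := by
  simp [Sig, Matrix.diagonal_apply, csl i]

lemma Sig_lc (j : Fin n) : Sig n (Fin.last n) j.castSucc = 0 := by
  simp [Sig, Matrix.diagonal_apply, (csl j).symm]

variable (lam : ℂ) (r : ℝ × ℝ → Fin n → ℂ)

lemma U_cc (i j : Fin n) (p : ℝ × ℝ) :
    Umat lam r p i.castSucc j.castSucc = if i = j then -Complex.I * lam else 0 := by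
  simp [Umat, Qm_cc, Sig_cc, mul_ite]
  split <;> simp

lemma U_cl (i : Fin n) (p : ℝ × ℝ) :
    Umat lam r p i.castSucc (Fin.last n) = r p i := by
  simp [Umat, Qm_cl, Sig_cl]

lemma U_lc (j : Fin n) (p : ℝ × ℝ) :
    Umat lam r p (Fin.last n) j.castSucc = -(starRingEnd ℂ) (r p j) := by
  simp [Umat, Qm_lc, Sig_lc]

lemma U_ll (p : ℝ × ℝ) :
    Umat lam r p (Fin.last n) (Fin.last n) = Complex.I * lam := by
  simp [Umat, Qm_ll, Sig_ll]

lemma V_cc (i j : Fin n) (p : ℝ × ℝ) :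
    Vmat lam r p i.castSucc j.castSucc
      = (if i = j then -2 * Complex.I * lam ^ 2 else 0)
        + Complex.I * (r p i * (starRingEnd ℂ) (r p j)) := by
  simp [Vmat, Matrix.sub_apply, Matrix.add_apply, mul_Sig, Qm_cc, QQ_cc, Sig_cc,
    csl j, mul_ite]
  split <;> ring

lemma V_cl (i : Fin n) (p : ℝ × ℝ) :
    Vmat lam r p i.castSucc (Fin.last n)
      = 2 * lam * r p i + Complex.I * pdx (fun q => r q i) p := by
  simp [Vmat, Matrix.sub_apply, Matrix.add_apply, mul_Sig, Qm_cl, QQ_cl, Sig_cl]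

lemma V_lc (j : Fin n) (p : ℝ × ℝ) :
    Vmat lam r p (Fin.last n) j.castSucc
      = -2 * lam * (starRingEnd ℂ) (r p j)
        + Complex.I * (starRingEnd ℂ) (pdx (fun q => r q j) p) := by
  simp [Vmat, Matrix.sub_apply, Matrix.add_apply, mul_Sig, Qm_lc, QQ_lc, Sig_lc, csl j]

lemma V_ll (p : ℝ × ℝ) :
    Vmat lam r p (Fin.last n) (Fin.last n)
      = 2 * Complex.I * lam ^ 2 - Complex.I * ∑ k, (starRingEnd ℂ) (r p k) * r p k := by
  simp [Vmat, Matrix.sub_apply, Matrix.add_apply, mul_Sig, Qm_ll, QQ_ll, Sig_ll]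

lemma sc {r : ℝ × ℝ → Fin n → ℂ} (hr : ContDiff ℝ (⊤ : ℕ∞) r) (ℓ : Fin n) :
    ContDiff ℝ (⊤ : ℕ∞) fun q => r q ℓ := contDiff_pi.mp hr ℓ

def ZCmat {n : ℕ} (lam : ℂ) (r : ℝ × ℝ → Fin n → ℂ) (p : ℝ × ℝ) :
    Matrix (Fin (n+1)) (Fin (n+1)) ℂ :=
  (Matrix.of fun i j => pdt (fun q => Umat lam r q i j) p)
    - (Matrix.of fun i j => pdx (fun q => Vmat lam r q i j) p)
    + (Umat lam r p * Vmat lam r p - Vmat lam r p * Umat lam r p)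

lemma ZC_cl {r : ℝ × ℝ → Fin n → ℂ} (hr : ContDiff ℝ (⊤ : ℕ∞) r) (p : ℝ × ℝ) (i : Fin n) :
    ZCmat lam r p i.castSucc (Fin.last n)
      = -Complex.I * (Complex.I * pdt (fun q => r q i) p + pdx (pdx (fun q => r q i)) p
          + 2 * (∑ j, (starRingEnd ℂ) (r p j) * r p j) * r p i) := by
  simp only [ZCmat, Matrix.sub_apply, Matrix.add_apply, Matrix.of_apply, Matrix.mul_apply]
  rw [Fin.sum_univ_castSucc, Fin.sum_univ_castSucc]
  simp only [U_cc, U_cl, U_lc, U_ll, V_cc, V_cl, V_lc, V_ll]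
  have hA := hasDerivAt_pdx (sc hr i) p
  have hX := hasDerivAt_pdx (contDiff_pdx (sc hr i)) p
  have hdx : pdx (fun q => 2 * lam * r q i + Complex.I * pdx (fun w => r w i) q) p
      = 2 * lam * pdx (fun q => r q i) p
        + Complex.I * pdx (pdx (fun q => r q i)) p :=
    ((hA.const_mul _).add (hX.const_mul _)).deriv
  rw [hdx]
  simp only [ite_mul, zero_mul, add_mul, Finset.sum_add_distrib, Finset.sum_ite_eq,
    Finset.mem_univ, if_true]
  have h2 : ∑ k, Complex.I * (r p i * (starRingEnd ℂ) (r p k)) * r p k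
      = Complex.I * r p i * ∑ k, (starRingEnd ℂ) (r p k) * r p k := by
    rw [Finset.mul_sum]; exact Finset.sum_congr rfl fun k _ => by ring
  rw [h2]
  ring_nf
  simp only [Complex.I_sq]
  ring

lemma pdt_const (c : ℂ) (p : ℝ × ℝ) : pdt (fun _ => c) p = 0 := by simp [pdt]
lemma pdx_const (c : ℂ) (p : ℝ × ℝ) : pdx (fun _ => c) p = 0 := by simp [pdx]

lemma sum_linear {m : ℕ} (F G H : Fin m → ℂ) (c d : ℂ)
    (h : ∀ k, F k = c * G k + d * H k) :
    ∑ k, F k = c * (∑ k, G k) + d * (∑ k, H k) := by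
  rw [Finset.mul_sum, Finset.mul_sum, ← Finset.sum_add_distrib]
  exact Finset.sum_congr rfl fun k _ => h k

lemma ZC_cc {r : ℝ × ℝ → Fin n → ℂ} (hr : ContDiff ℝ (⊤ : ℕ∞) r) (p : ℝ × ℝ) (i j : Fin n) :
    ZCmat lam r p i.castSucc j.castSucc = 0 := by
  simp only [ZCmat, Matrix.sub_apply, Matrix.add_apply, Matrix.of_apply, Matrix.mul_apply]
  rw [Fin.sum_univ_castSucc, Fin.sum_univ_castSucc]
  simp only [U_cc, U_cl, U_lc, U_ll, V_cc, V_cl, V_lc, V_ll]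
  have hAi := hasDerivAt_pdx (sc hr i) p
  have hAj := hasDerivAt_pdx (sc hr j) p
  have hdx : pdx (fun q => (if i = j then -2 * Complex.I * lam ^ 2 else 0)
        + Complex.I * (r q i * (starRingEnd ℂ) (r q j))) p
      = 0 + Complex.I * (pdx (fun q => r q i) p * (starRingEnd ℂ) (r p j)
          + r p i * (starRingEnd ℂ) (pdx (fun q => r q j) p)) :=
    ((hasDerivAt_const p.1 _).add ((hAi.mul hAj.conjC).const_mul _)).deriv
  rw [pdt_const, hdx]
  simp only [ite_mul, mul_ite, zero_mul, mul_zero, add_mul, Finset.sum_add_distrib,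
    Finset.sum_ite_eq, Finset.sum_ite_eq', Finset.mem_univ, if_true]
  by_cases hij : i = j <;> simp [hij] <;> ring

lemma ZC_ll {r : ℝ × ℝ → Fin n → ℂ} (hr : ContDiff ℝ (⊤ : ℕ∞) r) (p : ℝ × ℝ) :
    ZCmat lam r p (Fin.last n) (Fin.last n) = 0 := by
  simp only [ZCmat, Matrix.sub_apply, Matrix.add_apply, Matrix.of_apply, Matrix.mul_apply]
  rw [Fin.sum_univ_castSucc, Fin.sum_univ_castSucc]
  simp only [U_cc, U_cl, U_lc, U_ll, V_cc, V_cl, V_lc, V_ll]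
  have hA : ∀ k : Fin n, HasDerivAt (fun x => r (x, p.2) k) (pdx (fun q => r q k) p) p.1 :=
    fun k => hasDerivAt_pdx (sc hr k) p
  have hdx : pdx (fun q => 2 * Complex.I * lam ^ 2
        - Complex.I * ∑ k, (starRingEnd ℂ) (r q k) * r q k) p
      = 0 - Complex.I * ∑ k, ((starRingEnd ℂ) (pdx (fun q => r q k) p) * r p k
          + (starRingEnd ℂ) (r p k) * pdx (fun q => r q k) p) :=
    ((hasDerivAt_const p.1 _).sub
      ((HasDerivAt.fun_sum (fun k _ => ((hA k).conjC.mul (hA k)))).const_mul _)).deriv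
  rw [pdt_const, hdx]
  have h1 : ∑ k, ((starRingEnd ℂ) (pdx (fun q => r q k) p) * r p k
        + (starRingEnd ℂ) (r p k) * pdx (fun q => r q k) p)
      = (∑ k, (starRingEnd ℂ) (pdx (fun q => r q k) p) * r p k)
        + ∑ k, (starRingEnd ℂ) (r p k) * pdx (fun q => r q k) p :=
    Finset.sum_add_distrib
  have h2 : ∑ k, -(starRingEnd ℂ) (r p k) * (2 * lam * r p k + Complex.I * pdx (fun q => r q k) p)
      = (-2 * lam) * (∑ k, (starRingEnd ℂ) (r p k) * r p k)
        + (-Complex.I) * ∑ k, (starRingEnd ℂ) (r p k) * pdx (fun q => r q k) p :=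
    sum_linear _ _ _ _ _ (fun k => by ring)
  have h3 : ∑ k, (-2 * lam * (starRingEnd ℂ) (r p k)
        + Complex.I * (starRingEnd ℂ) (pdx (fun q => r q k) p)) * r p k
      = (-2 * lam) * (∑ k, (starRingEnd ℂ) (r p k) * r p k)
        + Complex.I * ∑ k, (starRingEnd ℂ) (pdx (fun q => r q k) p) * r p k :=
    sum_linear _ _ _ _ _ (fun k => by ring)
  linear_combination Complex.I * h1 + h2 - h3

lemma ZC_lc {r : ℝ × ℝ → Fin n → ℂ} (hr : ContDiff ℝ (⊤ : ℕ∞) r) (p : ℝ × ℝ) (j : Fin n) :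
    ZCmat lam r p (Fin.last n) j.castSucc
      = -Complex.I * (starRingEnd ℂ) (Complex.I * pdt (fun q => r q j) p
          + pdx (pdx (fun q => r q j)) p
          + 2 * (∑ k, (starRingEnd ℂ) (r p k) * r p k) * r p j) := by
  simp only [ZCmat, Matrix.sub_apply, Matrix.add_apply, Matrix.of_apply, Matrix.mul_apply]
  rw [Fin.sum_univ_castSucc, Fin.sum_univ_castSucc]
  simp only [U_cc, U_cl, U_lc, U_ll, V_cc, V_cl, V_lc, V_ll]
  have hA := hasDerivAt_pdx (sc hr j) p
  have hX := hasDerivAt_pdx (contDiff_pdx (sc hr j)) p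
  have hT := hasDerivAt_pdt (sc hr j) p
  have hdt : pdt (fun q => -(starRingEnd ℂ) (r q j)) p
      = -(starRingEnd ℂ) (pdt (fun q => r q j) p) := (hT.conjC.neg).deriv
  have hdx : pdx (fun q => -2 * lam * (starRingEnd ℂ) (r q j)
        + Complex.I * (starRingEnd ℂ) (pdx (fun w => r w j) q)) p
      = -2 * lam * (starRingEnd ℂ) (pdx (fun q => r q j) p)
        + Complex.I * (starRingEnd ℂ) (pdx (pdx (fun q => r q j)) p) :=
    ((hA.conjC.const_mul _).add (hX.conjC.const_mul _)).deriv
  rw [hdt, hdx]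
  simp only [mul_add, mul_ite, ite_mul, mul_zero, zero_mul, neg_mul, Finset.sum_add_distrib,
    Finset.sum_neg_distrib, Finset.sum_ite_eq, Finset.sum_ite_eq', Finset.mem_univ, if_true]
  have hS : (starRingEnd ℂ) (∑ k, (starRingEnd ℂ) (r p k) * r p k)
      = ∑ k, (starRingEnd ℂ) (r p k) * r p k := by
    rw [map_sum]
    exact Finset.sum_congr rfl fun k _ => by simp [mul_comm]
  have h2 : ∑ k, (starRingEnd ℂ) (r p k) * (Complex.I * (r p k * (starRingEnd ℂ) (r p j)))
      = (Complex.I * (starRingEnd ℂ) (r p j)) * (∑ k, (starRingEnd ℂ) (r p k) * r p k) := by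
    rw [Finset.mul_sum]
    exact Finset.sum_congr rfl fun k _ => by ring
  simp only [map_add, _root_.map_mul, map_ofNat, Complex.conj_I, Complex.conj_conj, hS]
  rw [h2]
  ring_nf
  simp only [Complex.I_sq]
  ring


theorem stmt0 {n : ℕ} (hn : 1 ≤ n) (r : ℝ × ℝ → Fin n → ℂ) (hr : ContDiff ℝ (⊤ : ℕ∞) r) :
    (∀ (lam : ℂ) (p : ℝ × ℝ),
      (Matrix.of fun i j => pdt (fun q => Umat lam r q i j) p)
        - (Matrix.of fun i j => pdx (fun q => Vmat lam r q i j) p)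
        + (Umat lam r p * Vmat lam r p - Vmat lam r p * Umat lam r p) = 0)
    ↔ (∀ p : ℝ × ℝ, VNLS r p) := by
  constructor
  · intro h p ℓ
    have h0 : ZCmat (0 : ℂ) r p = 0 := h 0 p
    have h1 := ZC_cl (0 : ℂ) hr p ℓ
    rw [h0] at h1
    simp only [Matrix.zero_apply] at h1
    exact (mul_eq_zero.mp h1.symm).resolve_left (by simp [Complex.I_ne_zero])
  · intro h lam p
    show ZCmat lam r p = 0
    ext i j
    simp only [Matrix.zero_apply]
    induction j using Fin.lastCases with
    | last =>
      induction i using Fin.lastCases with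
      | last => exact ZC_ll lam hr p
      | cast i => rw [ZC_cl lam hr p i, h p i, mul_zero]
    | cast j =>
      induction i using Fin.lastCases with
      | last => rw [ZC_lc lam hr p j, h p j]; simp
      | cast i => exact ZC_cc lam hr p i j
end
end

section
/- Let K ∈ GL_{n+1}(ℂ) be a constant invertible matrix, c ∈ ℂ a nonzero constant, V₊, V₋ : ℝ → M_{n+1}(ℂ) continuous, and D₊, D₋ : ℝ → GL_{n+1}(ℂ) differentiable matrix functions of t. Assume that for all t: K V₋(t) = V₊(t) K and K D₋(t) = c D₊(t) K. Then the dressed matrices Ṽ±(t) = D±(t) V±(t) D±(t)⁻¹ + D±′(t) D±(t)⁻¹ satisfy K Ṽ₋(t) = Ṽ₊(t) K for all t. (This is the algebraic mechanism by which a Darboux-dressing transformation preserves the integrable boundary constraint K(λ)V(−λ)|_{x=0} = V(λ)|_{x=0}K(λ).) -/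
open Complex Matrix

noncomputable section

/-- Entrywise derivative of a matrix-valued function of one real variable. -/
def mderiv {m : Type*} (F : ℝ → Matrix m m ℂ) (t : ℝ) : Matrix m m ℂ :=
  Matrix.of fun i j => deriv (fun s => F s i j) t

/-- The dressing transformation `V ↦ D V D⁻¹ + D' D⁻¹` at time `t`. -/
def dress {m : Type*} [Fintype m] [DecidableEq m]
    (D V : ℝ → Matrix m m ℂ) (t : ℝ) : Matrix m m ℂ :=
  D t * V t * (D t)⁻¹ + mderiv D t * (D t)⁻¹

theorem stmt7 {n : ℕ} (K : Matrix (Fin (n+1)) (Fin (n+1)) ℂ) (hK : IsUnit K)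
    (c : ℂ) (hc : c ≠ 0)
    (Vp Vm Dp Dm : ℝ → Matrix (Fin (n+1)) (Fin (n+1)) ℂ)
    (hVp : ∀ i j, Continuous fun t => Vp t i j)
    (hVm : ∀ i j, Continuous fun t => Vm t i j)
    (hDp : ∀ i j, Differentiable ℝ fun t => Dp t i j)
    (hDm : ∀ i j, Differentiable ℝ fun t => Dm t i j)
    (hDpu : ∀ t, IsUnit (Dp t)) (hDmu : ∀ t, IsUnit (Dm t))
    (hKV : ∀ t, K * Vm t = Vp t * K)
    (hKD : ∀ t, K * Dm t = c • (Dp t * K)) :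
    ∀ t, K * dress Dm Vm t = dress Dp Vp t * K := by
  have hKd : IsUnit K.det := (Matrix.isUnit_iff_isUnit_det K).mp hK
  intro t
  have hDpd : IsUnit (Dp t).det := (Matrix.isUnit_iff_isUnit_det _).mp (hDpu t)
  -- Dm t in terms of Dp t
  have hDm_eq : Dm t = c • (K⁻¹ * (Dp t * K)) := by
    have h := hKD t
    calc Dm t = K⁻¹ * (K * Dm t) := by
          rw [← Matrix.mul_assoc, Matrix.nonsing_inv_mul K hKd, Matrix.one_mul]
      _ = c • (K⁻¹ * (Dp t * K)) := by rw [h, Matrix.mul_smul]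
  have hinv : (Dm t)⁻¹ = c⁻¹ • (K⁻¹ * ((Dp t)⁻¹ * K)) := by
    apply Matrix.inv_eq_right_inv
    rw [hDm_eq, Matrix.smul_mul, Matrix.mul_smul, smul_smul, mul_inv_cancel₀ hc, one_smul]
    calc K⁻¹ * (Dp t * K) * (K⁻¹ * ((Dp t)⁻¹ * K))
        = K⁻¹ * (Dp t * ((K * K⁻¹) * ((Dp t)⁻¹ * K))) := by
          simp only [Matrix.mul_assoc]
      _ = 1 := by
          rw [Matrix.mul_nonsing_inv K hKd, Matrix.one_mul,
            ← Matrix.mul_assoc (Dp t), Matrix.mul_nonsing_inv _ hDpd, Matrix.one_mul,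
            Matrix.nonsing_inv_mul K hKd]
  have hKDm_inv : K * (Dm t)⁻¹ = c⁻¹ • ((Dp t)⁻¹ * K) := by
    rw [hinv, Matrix.mul_smul, ← Matrix.mul_assoc, Matrix.mul_nonsing_inv K hKd,
      Matrix.one_mul]
  -- derivative identity
  have hKderiv : K * mderiv Dm t = c • (mderiv Dp t * K) := by
    ext i j
    have hL : (K * mderiv Dm t) i j = deriv (fun s => (K * Dm s) i j) t := by
      simp only [Matrix.mul_apply, mderiv, Matrix.of_apply]
      rw [deriv_fun_sum]
      · exact Finset.sum_congr rfl fun k _ => (deriv_const_mul _ ((hDm k j).differentiableAt)).symm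
      · intro k _
        exact ((hDm k j).differentiableAt).const_mul _
    have hR : (c • (mderiv Dp t * K)) i j = deriv (fun s => (c • (Dp s * K)) i j) t := by
      simp only [Matrix.smul_apply, Matrix.mul_apply, mderiv, Matrix.of_apply, smul_eq_mul]
      rw [show (fun s => c * ∑ k, Dp s i k * K k j) = fun s => ∑ k, c * (Dp s i k * K k j) from
        funext fun s => by rw [Finset.mul_sum]]
      rw [deriv_fun_sum]
      · rw [Finset.mul_sum]
        refine Finset.sum_congr rfl fun k _ => ?_
        rw [deriv_const_mul _ (((hDp i k).differentiableAt).mul_const _),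
          deriv_mul_const ((hDp i k).differentiableAt)]
      · intro k _
        exact (((hDp i k).differentiableAt).mul_const _).const_mul _
    rw [hL, hR]
    congr 1
    funext s
    rw [hKD s]
  -- main computation
  unfold dress
  rw [Matrix.mul_add, Matrix.add_mul]
  congr 1
  · calc K * (Dm t * Vm t * (Dm t)⁻¹)
        = (K * Dm t) * Vm t * (Dm t)⁻¹ := by simp only [Matrix.mul_assoc]
      _ = c • (Dp t * (K * Vm t) * (Dm t)⁻¹) := by
          rw [hKD t]; simp only [Matrix.smul_mul, Matrix.mul_assoc]
      _ = c • (Dp t * Vp t * (K * (Dm t)⁻¹)) := by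
          rw [hKV t]; simp only [Matrix.mul_assoc]
      _ = Dp t * Vp t * (Dp t)⁻¹ * K := by
          rw [hKDm_inv, Matrix.mul_smul, smul_smul, mul_inv_cancel₀ hc, one_smul]
          simp only [Matrix.mul_assoc]
  · calc K * (mderiv Dm t * (Dm t)⁻¹)
        = (K * mderiv Dm t) * (Dm t)⁻¹ := by simp only [Matrix.mul_assoc]
      _ = c • (mderiv Dp t * (K * (Dm t)⁻¹)) := by
          rw [hKderiv]; simp only [Matrix.smul_mul, Matrix.mul_assoc]
      _ = mderiv Dp t * (Dp t)⁻¹ * K := by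
          rw [hKDm_inv, Matrix.mul_smul, smul_smul, mul_inv_cancel₀ hc, one_smul]
          simp only [Matrix.mul_assoc]
end
end
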